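/- arXiv:math/0112211 — 2 statements merged into one kernel-verified Lean document; each statement's English description precedes it below -/
import Mathlib

section
/- Let N ≥ 1. If ρ and ρ' in ℂ[[t]] are both N-special, then their composition ρ∘ρ' (the substitution of ρ' into ρ) is N-special. -/
open PowerSeries

/-- Substitution of the power series `a` (assumed to have zero constant
coefficient) into the power series `g`:  `substC a g = g ∘ a = g(a)`. -/
noncomputable def PowerSeries.substC (a g : PowerSeries ℂ) : PowerSeries ℂ :=
  PowerSeries.mk fun n =>
    ∑ k ∈ Finset.range (n + 1), PowerSeries.coeff (R := ℂ) k g * PowerSeries.coeff (R := ℂ) n (a ^ k)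

/-- A series `ρ ∈ ℂ[[t]]` is `N`-special if its constant coefficient is `0`,
its coefficient of `t^n` vanishes for every `n ≢ 1 (mod N)`, and its
coefficient of `t` is nonzero. -/
def IsNSpecial (N : ℕ) (ρ : PowerSeries ℂ) : Prop :=
  PowerSeries.constantCoeff (R := ℂ) ρ = 0 ∧
    (∀ n : ℕ, n % N ≠ 1 % N → PowerSeries.coeff (R := ℂ) n ρ = 0) ∧
    PowerSeries.coeff (R := ℂ) 1 ρ ≠ 0

namespace PowerSeries

section ResidueSupport

variable {R : Type*} [Semiring R] {N : ℕ}

theorem coeff_mul_eq_zero_of_not_modEq {a b : ℕ} {f g : R⟦X⟧}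
    (hf : ∀ n, ¬ n ≡ a [MOD N] → coeff n f = 0) (hg : ∀ n, ¬ n ≡ b [MOD N] → coeff n g = 0)
    (n : ℕ) (hn : ¬ n ≡ a + b [MOD N]) : coeff n (f * g) = 0 := by
  rw [coeff_mul]
  refine Finset.sum_eq_zero fun ⟨i, j⟩ hij => ?_
  by_cases hi : i ≡ a [MOD N]
  · have hj : ¬ j ≡ b [MOD N] := fun hj =>
      hn (Finset.HasAntidiagonal.mem_antidiagonal.mp hij ▸ hi.add hj)
    rw [hg j hj, mul_zero]
  · rw [hf i hi, zero_mul]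

theorem coeff_pow_eq_zero_of_not_modEq {a : ℕ} {f : R⟦X⟧}
    (hf : ∀ n, ¬ n ≡ a [MOD N] → coeff n f = 0) (k : ℕ) :
    ∀ n, ¬ n ≡ k * a [MOD N] → coeff n (f ^ k) = 0 := by
  induction k with
  | zero =>
    rintro n hn
    rw [pow_zero, coeff_one, if_neg]
    rintro rfl
    exact hn (by rw [zero_mul])
  | succ k ih =>
    rw [pow_succ, Nat.succ_mul]
    exact coeff_mul_eq_zero_of_not_modEq ih hf

end ResidueSupport

theorem constantCoeff_substC {a g : ℂ⟦X⟧} (hg : constantCoeff g = 0) :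
    constantCoeff (substC a g) = 0 := by
  simpa [substC] using hg

theorem coeff_one_substC {a g : ℂ⟦X⟧} (hg : constantCoeff g = 0) :
    coeff 1 (substC a g) = coeff 1 g * coeff 1 a := by
  simp [substC, Finset.sum_range_succ, hg]

theorem coeff_substC_eq_zero_of_not_modEq {N b c : ℕ} {a g : ℂ⟦X⟧}
    (ha : ∀ n, ¬ n ≡ c [MOD N] → coeff n a = 0) (hg : ∀ n, ¬ n ≡ b [MOD N] → coeff n g = 0)
    (n : ℕ) (hn : ¬ n ≡ b * c [MOD N]) : coeff n (substC a g) = 0 := by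
  rw [substC, coeff_mk]
  refine Finset.sum_eq_zero fun k _ => ?_
  by_cases hk : k ≡ b [MOD N]
  · rw [coeff_pow_eq_zero_of_not_modEq ha k n fun hnk => hn (hnk.trans (hk.mul_right c)),
      mul_zero]
  · rw [hg k hk, zero_mul]

end PowerSeries

theorem stmt2_general (N : ℕ) (ρ ρ' : PowerSeries ℂ)
    (h : IsNSpecial N ρ) (h' : IsNSpecial N ρ') :
    IsNSpecial N (PowerSeries.substC ρ' ρ) := by
  obtain ⟨hc, hs, ht⟩ := h
  obtain ⟨-, hs', ht'⟩ := h'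
  refine ⟨constantCoeff_substC hc, fun n hn => ?_, ?_⟩
  · exact coeff_substC_eq_zero_of_not_modEq hs' hs n (by rwa [one_mul])
  · rw [coeff_one_substC hc]
    exact mul_ne_zero ht ht'

/-- The composition `ρ ∘ ρ'` (substitution of `ρ'` into `ρ`) of two
`N`-special series is again `N`-special. -/
theorem stmt2 (N : ℕ) (hN : 1 ≤ N) (ρ ρ' : PowerSeries ℂ)
    (h : IsNSpecial N ρ) (h' : IsNSpecial N ρ') :
    IsNSpecial N (PowerSeries.substC ρ' ρ) :=
  stmt2_general N ρ ρ' h h'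
end

section
/- Let N ≥ 1 and let ρ, ρ' ∈ ℂ[[t]] be N-special. Suppose τ, τ', τ'' ∈ ℂ[[z]] satisfy τ(t^N) = ρ(t)^N, τ'(t^N) = ρ'(t)^N, and τ''(t^N) = (ρ∘ρ')(t)^N, where τ(t^N) denotes the substitution of t^N into τ. Then τ'' = τ∘τ'. (In other words, the map μ : ρ ↦ τ_ρ determined by τ_ρ(t^N) = ρ(t)^N is a homomorphism with respect to composition of power series.) -/
/-!
On series without constant term, `substC` is Mathlib's `PowerSeries.subst`. Substituting `t^N` is
injective, so it suffices to compare `(τ ∘ τ')(t^N)` with `(ρ ∘ ρ')(t)^N`, and associativity of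
substitution gives `(τ ∘ τ')(t^N) = τ(ρ'(t)^N) = (τ(t^N)) ∘ ρ' = ρ(ρ'(t))^N`.
-/

open PowerSeries

namespace PowerSeries

variable {R : Type*} [CommRing R]

theorem subst_X_pow_injective {k : ℕ} (hk : k ≠ 0) :
    Function.Injective (subst (X ^ k : R⟦X⟧) : R⟦X⟧ → R⟦X⟧) := by
  intro f g hfg
  ext n
  simpa [hk] using congrArg (coeff (n * k)) hfg

theorem constantCoeff_eq_zero_of_subst_X_pow_eq_pow {k : ℕ} (hk : k ≠ 0) {f a : R⟦X⟧}
    (ha : constantCoeff a = 0) (hf : subst (X ^ k) f = a ^ k) : constantCoeff f = 0 := by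
  simpa [hk, ha] using congrArg constantCoeff hf

theorem subst_X_pow_subst_eq_pow_subst {k : ℕ} (hk : k ≠ 0) {f g a b : R⟦X⟧}
    (hb : constantCoeff b = 0) (hf : subst (X ^ k) f = a ^ k) (hg : subst (X ^ k) g = b ^ k) :
    subst (X ^ k) (subst g f) = subst b a ^ k := by
  have hX : HasSubst (X ^ k : R⟦X⟧) := .X_pow hk
  have hb' : HasSubst b := .of_constantCoeff_zero' hb
  have hg' : HasSubst g :=
    .of_constantCoeff_zero' (constantCoeff_eq_zero_of_subst_X_pow_eq_pow hk hb hg)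
  calc subst (X ^ k) (subst g f) = subst (subst (X ^ k) g) f :=
        subst_comp_subst_apply (R := R) hg' hX f
    _ = subst (subst b (X ^ k : R⟦X⟧)) f := by rw [hg, subst_pow hb', subst_X hb']
    _ = subst b (a ^ k) := by rw [← subst_comp_subst_apply hX hb', hf]
    _ = subst b a ^ k := subst_pow hb' a k

theorem substC_eq_subst {a : ℂ⟦X⟧} (ha : constantCoeff a = 0) (g : ℂ⟦X⟧) :
    substC a g = subst a g := by
  ext n
  rw [substC, coeff_mk, coeff_subst' (.of_constantCoeff_zero' ha)]
  symm
  refine finsum_eq_sum_of_support_subset _ fun d hd => Finset.mem_range_succ_iff.mpr ?_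
  by_contra! hnd
  have hlt : (n : ℕ∞) < (a ^ d).order :=
    (Nat.cast_lt.mpr hnd).trans_le (le_order_pow_of_constantCoeff_eq_zero d ha)
  exact hd (by simp [coeff_of_lt_order n hlt])

end PowerSeries

theorem stmt4_general (N : ℕ) (hN : 1 ≤ N) (ρ ρ' τ τ' τ'' : PowerSeries ℂ)
    (h' : IsNSpecial N ρ')
    (hτ : PowerSeries.substC (PowerSeries.X ^ N) τ = ρ ^ N)
    (hτ' : PowerSeries.substC (PowerSeries.X ^ N) τ' = ρ' ^ N)
    (hτ'' : PowerSeries.substC (PowerSeries.X ^ N) τ'' =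
      (PowerSeries.substC ρ' ρ) ^ N) :
    τ'' = PowerSeries.substC τ' τ := by
  have hN₀ : N ≠ 0 := by omega
  have hX : constantCoeff (X ^ N : ℂ⟦X⟧) = 0 := by simp [hN₀]
  rw [substC_eq_subst hX] at hτ hτ' hτ''
  rw [substC_eq_subst h'.1] at hτ''
  rw [substC_eq_subst (constantCoeff_eq_zero_of_subst_X_pow_eq_pow hN₀ h'.1 hτ')]
  exact subst_X_pow_injective hN₀ (by rw [hτ'', subst_X_pow_subst_eq_pow_subst hN₀ h'.1 hτ hτ'])

/-- The map `μ : ρ ↦ τ_ρ` determined by `τ_ρ(t^N) = ρ(t)^N` is a homomorphism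
with respect to composition of power series. -/
theorem stmt4 (N : ℕ) (hN : 1 ≤ N) (ρ ρ' τ τ' τ'' : PowerSeries ℂ)
    (h : IsNSpecial N ρ) (h' : IsNSpecial N ρ')
    (hτ : PowerSeries.substC (PowerSeries.X ^ N) τ = ρ ^ N)
    (hτ' : PowerSeries.substC (PowerSeries.X ^ N) τ' = ρ' ^ N)
    (hτ'' : PowerSeries.substC (PowerSeries.X ^ N) τ'' =
      (PowerSeries.substC ρ' ρ) ^ N) :
    τ'' = PowerSeries.substC τ' τ :=
  stmt4_general N hN ρ ρ' τ τ' τ'' h' hτ hτ' hτ''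
end
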